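/- Let (A, ▷, ◁) be an L-dendriform superalgebra over a field of characteristic zero. Then the product x ∘ y := x▷y − (−1)^{|x||y|} y◁x, defined for homogeneous x, y ∈ A, makes (A, ∘) a pre-Lie superalgebra (the associated vertical pre-Lie superalgebra of (A, ▷, ◁)). -/

import Mathlib

/-!
Expanding both sides of the pre-Lie identity for `x ∘ y = x ▷ y − ε(x,y) y ◁ x`, the terms of
the form `(_ ▷ _) ▷ _` cancel by the first L-dendriform identity for `(x, y, z)`, and the terms
containing a `◁` cancel by the second one for `(x, z, y)` and for `(y, z, x)`. The only facts about
the super sign `ε` this uses are that it is symmetric, bimultiplicative and squares to `1`.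
-/

/-- The super sign `(−1)^{|x||y|}` for parities `i`, `j`. -/
def sgn (K : Type*) [Field K] (i j : ZMod 2) : K := (-1 : K) ^ (i.val * j.val)

/-- The vertical product `x ∘ y := x▷y − (−1)^{|x||y|} y◁x` on homogeneous elements of
parities `i`, `j`. -/
def vert {K A : Type*} [Field K] [AddCommGroup A] [Module K A]
    (rt lt : A →ₗ[K] A →ₗ[K] A) (i j : ZMod 2) (x y : A) : A :=
  rt x y - sgn K i j • lt y x

theorem sgn_comm (K : Type*) [Field K] (i j : ZMod 2) : sgn K i j = sgn K j i := by
  rw [sgn, sgn, mul_comm]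

theorem sgn_add_left (K : Type*) [Field K] (i j k : ZMod 2) :
    sgn K (i + j) k = sgn K i k * sgn K j k := by
  rw [sgn, sgn, sgn, ← pow_add, ← add_mul, neg_one_pow_eq_pow_mod_two, ZMod.val_add,
    Nat.mod_mul_mod, ← neg_one_pow_eq_pow_mod_two]

theorem sgn_add_right (K : Type*) [Field K] (i j k : ZMod 2) :
    sgn K i (j + k) = sgn K i j * sgn K i k := by
  rw [sgn_comm, sgn_add_left, sgn_comm K j, sgn_comm K k]

theorem sgn_mul_self (K : Type*) [Field K] (i j : ZMod 2) : sgn K i j * sgn K i j = 1 := by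
  rw [sgn, ← pow_add, ← two_mul, pow_mul, neg_one_sq, one_pow]

section Vertical

variable {K A : Type*} [Field K] [AddCommGroup A] [Module K A] (rt lt : A →ₗ[K] A →ₗ[K] A)

theorem vert_mem {𝒜 : ZMod 2 → Submodule K A}
    (hrt : ∀ (i j : ZMod 2), ∀ x ∈ 𝒜 i, ∀ y ∈ 𝒜 j, rt x y ∈ 𝒜 (i + j))
    (hlt : ∀ (i j : ZMod 2), ∀ x ∈ 𝒜 i, ∀ y ∈ 𝒜 j, lt x y ∈ 𝒜 (i + j))
    {i j : ZMod 2} {x y : A} (hx : x ∈ 𝒜 i) (hy : y ∈ 𝒜 j) :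
    vert rt lt i j x y ∈ 𝒜 (i + j) :=
  Submodule.sub_mem _ (hrt i j x hx y hy)
    (Submodule.smul_mem _ _ (add_comm i j ▸ hlt j i y hy x hx))

theorem vert_preLie {i j k : ZMod 2} {x y z : A}
    (h₁ : rt x (rt y z)
        = rt (rt x y) z + rt (lt x y) z + sgn K i j • rt y (rt x z)
          - sgn K i j • rt (lt y x) z - sgn K i j • rt (rt y x) z)
    (h₂ : rt x (lt z y)
        = lt (rt x z) y + sgn K i k • lt z (rt x y)
          + sgn K i k • lt z (lt x y) - sgn K i k • lt (lt z x) y)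
    (h₃ : rt y (lt z x)
        = lt (rt y z) x + sgn K j k • lt z (rt y x)
          + sgn K j k • lt z (lt y x) - sgn K j k • lt (lt z y) x) :
    vert rt lt (i + j) k (vert rt lt i j x y) z - vert rt lt i (j + k) x (vert rt lt j k y z)
      = sgn K i j • (vert rt lt (i + j) k (vert rt lt j i y x) z
          - vert rt lt j (i + k) y (vert rt lt i k x z)) := by
  have hs := sgn_mul_self K i j
  simp only [vert, map_sub, map_smul, LinearMap.sub_apply, LinearMap.smul_apply,
    sgn_add_left, sgn_add_right, sgn_comm K j i]
  set s := sgn K i j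
  set a := sgn K i k
  set b := sgn K j k
  -- after `h₁`, `h₂`, `h₃` the two sides differ by a multiple of `s * s - 1`
  linear_combination (norm := module) -h₁ + b • h₂ - (s * a) • h₃
    + hs • (rt (lt x y) z - b • lt (rt x z) y + (a * b) • lt (lt z x) y - (a * b) • lt z (lt x y))

end Vertical

theorem stmt14_general {K A : Type*} [Field K] [AddCommGroup A] [Module K A]
    (𝒜 : ZMod 2 → Submodule K A)
    (rt lt : A →ₗ[K] A →ₗ[K] A)
    (hrt_even : ∀ (i j : ZMod 2), ∀ x ∈ 𝒜 i, ∀ y ∈ 𝒜 j, rt x y ∈ 𝒜 (i + j))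
    (hlt_even : ∀ (i j : ZMod 2), ∀ x ∈ 𝒜 i, ∀ y ∈ 𝒜 j, lt x y ∈ 𝒜 (i + j))
    (hLD1 : ∀ (i j k : ZMod 2), ∀ x ∈ 𝒜 i, ∀ y ∈ 𝒜 j, ∀ z ∈ 𝒜 k,
      rt x (rt y z)
        = rt (rt x y) z + rt (lt x y) z + sgn K i j • rt y (rt x z)
          - sgn K i j • rt (lt y x) z - sgn K i j • rt (rt y x) z)
    (hLD2 : ∀ (i j k : ZMod 2), ∀ x ∈ 𝒜 i, ∀ y ∈ 𝒜 j, ∀ z ∈ 𝒜 k,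
      rt x (lt y z)
        = lt (rt x y) z + sgn K i j • lt y (rt x z)
          + sgn K i j • lt y (lt x z) - sgn K i j • lt (lt y x) z) :
    -- ∘ is even
    (∀ (i j : ZMod 2), ∀ x ∈ 𝒜 i, ∀ y ∈ 𝒜 j, vert rt lt i j x y ∈ 𝒜 (i + j)) ∧
    -- pre-Lie super-identity for ∘
    (∀ (i j k : ZMod 2), ∀ x ∈ 𝒜 i, ∀ y ∈ 𝒜 j, ∀ z ∈ 𝒜 k,
      vert rt lt (i + j) k (vert rt lt i j x y) z
          - vert rt lt i (j + k) x (vert rt lt j k y z)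
        = sgn K i j • (vert rt lt (i + j) k (vert rt lt j i y x) z
            - vert rt lt j (i + k) y (vert rt lt i k x z))) :=
  ⟨fun _ _ _ hx _ hy => vert_mem rt lt hrt_even hlt_even hx hy,
    fun i j k x hx y hy z hz => vert_preLie rt lt (hLD1 i j k x hx y hy z hz)
      (hLD2 i k j x hx z hz y hy) (hLD2 j k i y hy z hz x hx)⟩

/-- the product `x ∘ y := x▷y − (−1)^{|x||y|} y◁x` of an L-dendriform
superalgebra `(A,▷,◁)` is a pre-Lie superalgebra product (the associated vertical
pre-Lie superalgebra). -/
theorem stmt14 {K A : Type*} [Field K] [CharZero K] [AddCommGroup A] [Module K A]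
    (𝒜 : ZMod 2 → Submodule K A) (hgr : DirectSum.IsInternal 𝒜)
    (rt lt : A →ₗ[K] A →ₗ[K] A)
    (hrt_even : ∀ (i j : ZMod 2), ∀ x ∈ 𝒜 i, ∀ y ∈ 𝒜 j, rt x y ∈ 𝒜 (i + j))
    (hlt_even : ∀ (i j : ZMod 2), ∀ x ∈ 𝒜 i, ∀ y ∈ 𝒜 j, lt x y ∈ 𝒜 (i + j))
    (hLD1 : ∀ (i j k : ZMod 2), ∀ x ∈ 𝒜 i, ∀ y ∈ 𝒜 j, ∀ z ∈ 𝒜 k,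
      rt x (rt y z)
        = rt (rt x y) z + rt (lt x y) z + sgn K i j • rt y (rt x z)
          - sgn K i j • rt (lt y x) z - sgn K i j • rt (rt y x) z)
    (hLD2 : ∀ (i j k : ZMod 2), ∀ x ∈ 𝒜 i, ∀ y ∈ 𝒜 j, ∀ z ∈ 𝒜 k,
      rt x (lt y z)
        = lt (rt x y) z + sgn K i j • lt y (rt x z)
          + sgn K i j • lt y (lt x z) - sgn K i j • lt (lt y x) z) :
    -- ∘ is even
    (∀ (i j : ZMod 2), ∀ x ∈ 𝒜 i, ∀ y ∈ 𝒜 j, vert rt lt i j x y ∈ 𝒜 (i + j)) ∧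
    -- pre-Lie super-identity for ∘
    (∀ (i j k : ZMod 2), ∀ x ∈ 𝒜 i, ∀ y ∈ 𝒜 j, ∀ z ∈ 𝒜 k,
      vert rt lt (i + j) k (vert rt lt i j x y) z
          - vert rt lt i (j + k) x (vert rt lt j k y z)
        = sgn K i j • (vert rt lt (i + j) k (vert rt lt j i y x) z
            - vert rt lt j (i + k) y (vert rt lt i k x z))) :=
  stmt14_general 𝒜 rt lt hrt_even hlt_even hLD1 hLD2
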